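/- arXiv:1112.4800 — 2 statements merged into one kernel-verified Lean document; each statement's English description precedes it below -/
import Mathlib

section
/- Let (ξ_σ)_{σ<ω₁} be a strictly increasing family of countable ordinals indexed by the countable ordinals, and set ξ_{ω₁} = ω₁. Then there exists a continuous map φ : [0,ω₁] → [0,ω₁] with φ∘φ = φ such that the composition operator Φ : f ↦ f∘φ is a bounded linear projection on C([0,ω₁]) of norm at most one (Φ∘Φ = Φ, ‖Φ‖ ≤ 1) whose range equals the closed linear span of {1_{[0,ξ_σ]} : σ ≤ ω₁}. -/
/-!
Let `S ⊆ [0, ω₁]` be the set of levels `ξ_σ`, and call two points equivalent when they lie in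
the same cut of `S`, i.e. when every indicator `1_{[0,s]}`, `s ∈ S`, takes the same value at
both. The classes are intervals, and `φ` sends a point to the least element of its class.
Then `b < φ x` holds iff some `s ∈ S` satisfies `b ≤ s < x`; this makes `φ` monotone, and
continuous because preimages of lower sets are lower sets (open in a well-order) while the
preimage of `(b, ∞)` is a union of rays `(s, ∞)`. Taking the least element matters: a class
`[u, t]` whose left end is a limit of `S` must be sent to `u`.

Each `1_{[0,s]}` is `φ`-invariant, so the closed span lies in the range of `f ↦ f ∘ φ`. Since
`1_{[0,a]} 1_{[0,b]} = 1_{[0, min a b]}` and `ξ_{ω₁} = ω₁`, the span is a unital algebra, and it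
separates the points of the compact set `φ([0, ω₁])`; Stone–Weierstrass there gives the
reverse inclusion.
-/

set_option synthInstance.maxHeartbeats 1000000
set_option maxHeartbeats 2000000

noncomputable section
open Set Ordinal

/-- `ω₁`, the first uncountable ordinal. -/
abbrev omega1 : Ordinal.{0} := Ordinal.omega 1

/-- Every ordinal interval `[0, o]` is a compact space in its (inherited) order topology. -/
instance (o : Ordinal) : CompactSpace (Set.Iic o) := by
  have h : IsCompact (Set.Iic o) := by
    have := isCompact_Icc (a := (⊥ : Ordinal)) (b := o)
    rwa [Set.Icc_bot] at this
  exact isCompact_iff_compactSpace.mp h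

/-- The Banach space `C([0, ω₁])` of continuous real-valued functions on `[0, ω₁]`,
with the supremum norm. -/
abbrev CC := C(Set.Iic omega1, ℝ)

/-- The interval `{α ∈ [0, o] : α ≤ σ}` is clopen. -/
theorem isClopen_le (o σ : Ordinal) : IsClopen {α : Set.Iic o | (α : Ordinal) ≤ σ} := by
  constructor
  · exact isClosed_Iic.preimage continuous_subtype_val
  · have : {α : Set.Iic o | (α : Ordinal) ≤ σ}
        = (Subtype.val) ⁻¹' (Set.Iio (Order.succ σ)) := by
      ext α; simp [Order.lt_succ_iff]
    rw [this]
    exact isOpen_Iio.preimage continuous_subtype_val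

/-- The indicator function `1_{[0,σ]}` as an element of `C([0, ω₁])`. -/
def indic (σ : Ordinal) : CC :=
  letI : ∀ j : Set.Iic omega1, Decidable (j ∈ {α : Set.Iic omega1 | (α : Ordinal) ≤ σ}) :=
    fun _ => Classical.dec _
  ⟨({α : Set.Iic omega1 | (α : Ordinal) ≤ σ}).piecewise (fun _ => (1 : ℝ)) (fun _ => 0),
    Continuous.piecewise
      (fun a ha => by
        rw [(isClopen_le omega1 σ).frontier_eq] at ha
        exact absurd ha (Set.notMem_empty a))
      continuous_const continuous_const⟩

open Submodule

section CutRetraction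

variable {X : Type*} [LinearOrder X] [WellFoundedLT X] (S : Set X)

def SameCut (x y : X) : Prop := ∀ s ∈ S, x ≤ s ↔ y ≤ s

def cutMin (x : X) : X := wellFounded_lt.min {y | SameCut S y x} ⟨x, fun _ _ => Iff.rfl⟩

variable {S} {b x y s : X}

theorem sameCut_cutMin (x : X) : SameCut S (cutMin S x) x :=
  wellFounded_lt.min_mem {y | SameCut S y x} _

theorem cutMin_le_of_sameCut (h : SameCut S y x) : cutMin S x ≤ y :=
  wellFounded_lt.min_le h

theorem cutMin_le (x : X) : cutMin S x ≤ x :=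
  cutMin_le_of_sameCut fun _ _ => Iff.rfl

theorem cutMin_le_iff (hs : s ∈ S) : cutMin S x ≤ s ↔ x ≤ s :=
  sameCut_cutMin x s hs

theorem lt_cutMin_iff : b < cutMin S x ↔ ∃ s ∈ S, b ≤ s ∧ s < x := by
  constructor
  · intro hb
    by_contra! hno
    have hbx : SameCut S b x := fun s hs =>
      ⟨hno s hs, fun hxs => (hb.trans_le (cutMin_le x)).le.trans hxs⟩
    exact (cutMin_le_of_sameCut hbx).not_gt hb
  · rintro ⟨s, hs, hbs, hsx⟩
    exact hbs.trans_lt (lt_of_not_ge fun h => hsx.not_ge ((cutMin_le_iff hs).1 h))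

theorem cutMin_cutMin (x : X) : cutMin S (cutMin S x) = cutMin S x := by
  have hx := sameCut_cutMin (S := S) x
  refine le_antisymm (cutMin_le_of_sameCut ?_) (cutMin_le_of_sameCut ?_)
  · exact fun s hs => (sameCut_cutMin x s hs).trans (hx s hs).symm
  · exact fun s hs => (sameCut_cutMin _ s hs).trans (hx s hs)

theorem monotone_cutMin : Monotone (cutMin S) := by
  intro x y hxy
  by_contra! h
  obtain ⟨s, hs, hys, hsx⟩ := lt_cutMin_iff.1 h
  exact (hsx.trans_le hxy).not_ge ((cutMin_le_iff hs).1 hys)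

theorem exists_mem_Ico_of_cutMin_lt (h : cutMin S x < cutMin S y) : ∃ s ∈ S, s ∈ Ico x y := by
  obtain ⟨s, hs, hxs, hsy⟩ := lt_cutMin_iff.1 h
  exact ⟨s, hs, (cutMin_le_iff hs).1 hxs, hsy⟩

theorem continuous_cutMin [TopologicalSpace X] [OrderTopology X] : Continuous (cutMin S) := by
  refine OrderTopology.continuous_iff.2 fun b =>
    ⟨?_, ((isLowerSet_Iio b).preimage monotone_cutMin).isOpen⟩
  have : cutMin S ⁻¹' Ioi b = ⋃ s ∈ S ∩ Ici b, Ioi s := by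
    ext x
    simp [lt_cutMin_iff, and_assoc]
  rw [this]
  exact isOpen_biUnion fun _ _ => isOpen_Ioi

end CutRetraction

section CompositionOperator

variable {X Y : Type*} [TopologicalSpace X] [CompactSpace X] [TopologicalSpace Y] [CompactSpace Y]

def compRightCLM (φ : C(Y, X)) : C(X, ℝ) →L[ℝ] C(Y, ℝ) :=
  (ContinuousMap.compRightAlgHom ℝ ℝ φ).toLinearMap.mkContinuous 1 fun f => by
    simpa using (ContinuousMap.norm_le _ (norm_nonneg f)).2 fun y => f.norm_coe_le_norm (φ y)

@[simp]
theorem compRightCLM_apply (φ : C(Y, X)) (f : C(X, ℝ)) : compRightCLM φ f = f.comp φ := rfl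

theorem norm_compRightCLM_le (φ : C(Y, X)) : ‖compRightCLM φ‖ ≤ 1 :=
  LinearMap.mkContinuous_norm_le _ zero_le_one _

variable {φ : C(X, X)}

theorem compRightCLM_comp_self (hφ : φ.comp φ = φ) :
    (compRightCLM φ).comp (compRightCLM φ) = compRightCLM φ := by
  ext f : 1
  simp [ContinuousMap.comp_assoc, hφ]

theorem range_compRightCLM (hφ : φ.comp φ = φ) :
    (LinearMap.range (compRightCLM φ : C(X, ℝ) →ₗ[ℝ] C(X, ℝ)) : Set C(X, ℝ))
      = {f | f.comp φ = f} := by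
  ext f
  constructor
  · rintro ⟨g, rfl⟩
    simp [ContinuousMap.comp_assoc, hφ]
  · exact fun hf => ⟨f, hf⟩

/-- Stone–Weierstrass on the compact set `range φ`, pulled back along `φ`. -/
theorem mem_closure_of_comp_eq_self {A : Subalgebra ℝ C(X, ℝ)} (hA : ∀ g ∈ A, g.comp φ = g)
    (hsep : ∀ x y, φ x ≠ φ y → ∃ g ∈ A, g x ≠ g y) {f : C(X, ℝ)} (hf : f.comp φ = f) :
    f ∈ closure (A : Set C(X, ℝ)) := by
  have : CompactSpace (range φ) := isCompact_iff_compactSpace.mp (isCompact_range φ.continuous)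
  let restrict := ContinuousMap.compRightAlgHom ℝ ℝ ⟨((↑) : range φ → X), continuous_subtype_val⟩
  let pullback := ContinuousMap.compRightAlgHom ℝ ℝ
    (⟨rangeFactorization φ, φ.continuous.rangeFactorization⟩ : C(X, range φ))
  have hsepY : (A.map restrict).SeparatesPoints := by
    rintro ⟨_, x, rfl⟩ ⟨_, y, rfl⟩ hxy
    obtain ⟨g, hg, hgxy⟩ := hsep x y fun h => hxy (Subtype.ext h)
    refine ⟨_, ⟨restrict g, ⟨g, hg, rfl⟩, rfl⟩, ?_⟩
    simpa [restrict, ← ContinuousMap.comp_apply, hA g hg] using hgxy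
  have hfY := ContinuousMap.continuousMap_mem_subalgebra_closure_of_separatesPoints _ hsepY
    (restrict f)
  have hpull : ∀ g : C(X, ℝ), pullback (restrict g) = g.comp φ := fun _ => rfl
  rw [← hf, ← hpull]
  refine map_mem_closure (ContinuousMap.compRightAlgHom_continuous ℝ ℝ _) hfY ?_
  rintro _ ⟨g, hg, rfl⟩
  change pullback (restrict g) ∈ A
  rwa [hpull, hA g hg]

theorem range_compRightCLM_eq_closure_span (hφ : φ.comp φ = φ) {G : Set C(X, ℝ)}
    (hG_one : 1 ∈ G) (hG_mul : ∀ f ∈ G, ∀ g ∈ G, f * g ∈ G) (hGφ : ∀ g ∈ G, g.comp φ = g)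
    (hsep : ∀ x y, φ x ≠ φ y → ∃ g ∈ G, g x ≠ g y) :
    (LinearMap.range (compRightCLM φ : C(X, ℝ) →ₗ[ℝ] C(X, ℝ)) : Set C(X, ℝ))
      = closure (span ℝ G : Set C(X, ℝ)) := by
  let M : Submonoid C(X, ℝ) := ⟨⟨G, fun {f g} hf hg => hG_mul f hf g hg⟩, hG_one⟩
  have hspan : Subalgebra.toSubmodule (Algebra.adjoin ℝ G) = span ℝ G :=
    Algebra.adjoin_eq_span_of_subset ℝ fun f hf => subset_span ((Submonoid.closure_eq M).le hf)
  apply Subset.antisymm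
  · rw [range_compRightCLM hφ, ← hspan]
    refine fun f hf => mem_closure_of_comp_eq_self (fun g hg => ?_) (fun x y hxy => ?_) hf
    · have : Algebra.adjoin ℝ G ≤ AlgHom.equalizer (ContinuousMap.compRightAlgHom ℝ ℝ φ)
          (AlgHom.id ℝ _) := Algebra.adjoin_le hGφ
      exact this hg
    · obtain ⟨g, hg, hgxy⟩ := hsep x y hxy
      exact ⟨g, Algebra.subset_adjoin hg, hgxy⟩
  · refine closure_minimal (span_le.2 fun g hg => ⟨g, hGφ g hg⟩) ?_
    rw [range_compRightCLM hφ]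
    exact isClosed_eq (compRightCLM φ).continuous continuous_id

end CompositionOperator

section Indicators

theorem indic_apply (σ : Ordinal) (x : Iic omega1) :
    indic σ x = if (x : Ordinal) ≤ σ then 1 else 0 := by
  simp [indic, Set.piecewise]

theorem indic_omega1 : indic omega1 = 1 := by
  ext x
  simp [indic_apply, mem_Iic.mp x.2]

theorem indic_mul_indic_of_le {a b : Ordinal} (h : a ≤ b) : indic a * indic b = indic a := by
  ext x
  by_cases hx : (x : Ordinal) ≤ a
  · simp [indic_apply, hx, hx.trans h]
  · simp [indic_apply, hx]

def cutRetraction (T : Set Ordinal) : C(Iic omega1, Iic omega1) :=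
  ⟨cutMin (Subtype.val ⁻¹' T), continuous_cutMin⟩

variable {T : Set Ordinal}

theorem cutRetraction_comp_self : (cutRetraction T).comp (cutRetraction T) = cutRetraction T :=
  ContinuousMap.ext cutMin_cutMin

theorem indic_comp_cutRetraction {σ : Ordinal} (hσ : σ ∈ T) :
    (indic σ).comp (cutRetraction T) = indic σ := by
  ext x
  have hle : (cutRetraction T x : Ordinal) ≤ σ ↔ (x : Ordinal) ≤ σ := by
    rcases le_or_gt σ omega1 with hσω | hσω
    · exact cutMin_le_iff (s := (⟨σ, hσω⟩ : Iic omega1)) hσ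
    · exact iff_of_true ((mem_Iic.1 (cutRetraction T x).2).trans hσω.le)
        ((mem_Iic.1 x.2).trans hσω.le)
  simp only [ContinuousMap.comp_apply, indic_apply, hle]

theorem exists_indic_ne_of_cutRetraction_lt {x y : Iic omega1}
    (h : cutRetraction T x < cutRetraction T y) : ∃ g ∈ indic '' T, g x ≠ g y := by
  obtain ⟨s, hs, hxs, hsy⟩ := exists_mem_Ico_of_cutMin_lt h
  refine ⟨indic s, mem_image_of_mem _ hs, ?_⟩
  simp [indic_apply, Subtype.coe_le_coe.2 hxs, hsy]

theorem range_compRightCLM_cutRetraction (hT : omega1 ∈ T) :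
    (LinearMap.range (compRightCLM (cutRetraction T) : CC →ₗ[ℝ] CC) : Set CC)
      = closure (span ℝ (indic '' T) : Set CC) := by
  refine range_compRightCLM_eq_closure_span cutRetraction_comp_self ⟨omega1, hT, indic_omega1⟩
    ?_ ?_ ?_
  · rintro _ ⟨a, ha, rfl⟩ _ ⟨b, hb, rfl⟩
    rcases le_total a b with hab | hba
    · exact ⟨a, ha, (indic_mul_indic_of_le hab).symm⟩
    · exact ⟨b, hb, by rw [mul_comm, indic_mul_indic_of_le hba]⟩
  · rintro _ ⟨σ, hσ, rfl⟩
    exact indic_comp_cutRetraction hσ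
  · intro x y hxy
    rcases hxy.lt_or_gt with h | h
    · exact exists_indic_ne_of_cutRetraction_lt h
    · obtain ⟨g, hg, hgyx⟩ := exists_indic_ne_of_cutRetraction_lt h
      exact ⟨g, hg, hgyx.symm⟩

end Indicators

theorem exists_projection_onto_span_indicators_general (ξ : Ordinal → Ordinal)
    (htop : ξ omega1 = omega1) :
    ∃ φ : Set.Iic omega1 → Set.Iic omega1, Continuous φ ∧ φ ∘ φ = φ ∧
      ∃ Φ : CC →L[ℝ] CC,
        (∀ (f : CC) (α : Set.Iic omega1), Φ f α = f (φ α)) ∧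
        Φ.comp Φ = Φ ∧ ‖Φ‖ ≤ 1 ∧
        (LinearMap.range (Φ : CC →ₗ[ℝ] CC) : Set CC)
          = closure (Submodule.span ℝ {g : CC | ∃ σ ≤ omega1, g = indic (ξ σ)} : Set CC) := by
  let T := ξ '' Iic omega1
  have hT : omega1 ∈ T := ⟨omega1, self_mem_Iic, htop⟩
  have hG : {g : CC | ∃ σ ≤ omega1, g = indic (ξ σ)} = indic '' T := by
    ext g
    simp [T, eq_comm]
  refine ⟨cutRetraction T, (cutRetraction T).continuous,
    congrArg DFunLike.coe cutRetraction_comp_self, compRightCLM (cutRetraction T),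
    fun _ _ => rfl, compRightCLM_comp_self cutRetraction_comp_self,
    norm_compRightCLM_le _, ?_⟩
  rw [hG]
  exact range_compRightCLM_cutRetraction hT

/-- Given a strictly increasing family `(ξ_σ)_{σ<ω₁}` of countable ordinals with `ξ_{ω₁} = ω₁`,
there is a continuous idempotent map `φ` on `[0,ω₁]` whose composition operator `Φ : f ↦ f ∘ φ`
is a norm-one-at-most linear projection of `C([0,ω₁])` onto the closed linear span of the
indicator functions `1_{[0,ξ_σ]}`, `σ ≤ ω₁`. -/
theorem exists_projection_onto_span_indicators (ξ : Ordinal → Ordinal)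
    (hcount : ∀ σ < omega1, ξ σ < omega1)
    (hmono : ∀ σ τ : Ordinal, σ < τ → τ < omega1 → ξ σ < ξ τ)
    (htop : ξ omega1 = omega1) :
    ∃ φ : Set.Iic omega1 → Set.Iic omega1, Continuous φ ∧ φ ∘ φ = φ ∧
      ∃ Φ : CC →L[ℝ] CC,
        (∀ (f : CC) (α : Set.Iic omega1), Φ f α = f (φ α)) ∧
        Φ.comp Φ = Φ ∧ ‖Φ‖ ≤ 1 ∧
        (LinearMap.range (Φ : CC →ₗ[ℝ] CC) : Set CC)
          = closure (Submodule.span ℝ {g : CC | ∃ σ ≤ omega1, g = indic (ξ σ)} : Set CC) :=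
  exists_projection_onto_span_indicators_general ξ htop
end
end

section
/- Let T be a bounded linear operator on C([0,ω₁]) such that T ≠ P̃σ ∘ T ∘ P̃σ for every countable ordinal σ. Then there exists ε > 0 such that for every countable ordinal ξ there is a function f ∈ C([0,ω₁]) with f(α) = 0 for all α ≤ ξ and f(ω₁) = 0, satisfying ‖f‖ ≤ 1 and ‖Tf‖ ≥ ε. -/
set_option synthInstance.maxHeartbeats 1000000
set_option maxHeartbeats 2000000

noncomputable section
open Set Ordinal

/-- The continuous retraction of `[0, ω₁]` fixing `[0, σ]` and sending `(σ, ω₁]` to `ω₁`. -/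
def retr (σ : Ordinal) : C(Set.Iic omega1, Set.Iic omega1) :=
  letI : ∀ j : Set.Iic omega1, Decidable (j ∈ {α : Set.Iic omega1 | (α : Ordinal) ≤ σ}) :=
    fun _ => Classical.dec _
  ⟨({α : Set.Iic omega1 | (α : Ordinal) ≤ σ}).piecewise id
      (fun _ => ⟨omega1, Set.self_mem_Iic⟩),
    Continuous.piecewise
      (fun a ha => by
        rw [(isClopen_le omega1 σ).frontier_eq] at ha
        exact absurd ha (Set.notMem_empty a))
      continuous_id continuous_const⟩

/-- The projection `P̃σ` on `C([0, ω₁])`: `(P̃σ f)(α) = f α` for `α ≤ σ`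
and `(P̃σ f)(α) = f ω₁` for `σ < α ≤ ω₁`. -/
def Ptilde (σ : Ordinal) : CC →L[ℝ] CC :=
  LinearMap.mkContinuous
    { toFun := fun f => f.comp (retr σ)
      map_add' := fun f g => by ext x; simp
      map_smul' := fun c f => by ext x; simp }
    1
    (fun f => by
      rw [one_mul]
      exact (ContinuousMap.norm_le _ (norm_nonneg f)).mpr
        fun x => ContinuousMap.norm_coe_le_norm f _)

/-!
If no such `ε` exists, let `ξₙ < ω₁` witness the failure for `ε = 1/(n+1)` and `σ = sup ξₙ < ω₁`.
Then `T` kills every function vanishing on `[0, σ]` and at `ω₁`, so `T = T ∘ P̃σ`. The range of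
`T ∘ P̃σ` is separable, and every continuous function on `[0, ω₁]` is constant on a tail
`(τ, ω₁]` (its fibre over the value at `ω₁` is a `Gδ` containing `ω₁`); as `ω₁` has uncountable
cofinality, a single countable `τ` serves a dense sequence, hence the whole range. For
`ρ = max σ τ` this gives `P̃ρ ∘ T ∘ P̃ρ = P̃ρ ∘ T ∘ P̃σ = T ∘ P̃σ = T`.
-/

open Topology TopologicalSpace

instance : Nontrivial (Iic omega1) :=
  ⟨⟨⟨0, (omega_pos 1).le⟩, ⊤, fun h => (omega_pos 1).ne (congrArg Subtype.val h)⟩⟩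

lemma countable_Iic_of_lt_omega1 {τ : Ordinal} (hτ : τ < omega1) : Countable (Iic τ) := by
  rw [← Cardinal.mk_le_aleph0_iff, ← Order.Iio_succ, Cardinal.mk_Iio_ordinal,
    Cardinal.lift_le_aleph0, ← Order.lt_succ_iff, Cardinal.succ_aleph0, ← Cardinal.lt_ord,
    Cardinal.ord_aleph]
  exact (Cardinal.isSuccLimit_omega 1).succ_lt hτ

lemma IsGδ.exists_lt_omega1_of_top_mem {s : Set (Iic omega1)} (hs : IsGδ s) (htop : ⊤ ∈ s) :
    ∃ τ < omega1, ∀ x : Iic omega1, τ < x → x ∈ s := by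
  obtain ⟨U, hUo, rfl⟩ := hs.eq_iInter_nat
  have hU : ∀ n, U n ∈ 𝓝 ⊤ := fun n => (hUo n).mem_nhds (mem_iInter.1 htop n)
  choose a ha hsub using fun n => nhds_top_basis.mem_iff.1 (hU n)
  refine ⟨⨆ n, (a n : Ordinal), iSup_lt_omega_one fun n => ha n, fun x hx => ?_⟩
  exact mem_iInter.2 fun n => hsub n ((Ordinal.le_iSup _ n).trans_lt hx)

section Ptilde

lemma retr_apply (σ : Ordinal) (x : Iic omega1) :
    retr σ x = if (x : Ordinal) ≤ σ then x else ⊤ := by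
  show ({α : Iic omega1 | (α : Ordinal) ≤ σ}).piecewise id (fun _ => ⊤) x = _
  by_cases h : (x : Ordinal) ≤ σ
  · rw [if_pos h]; exact piecewise_eq_of_mem _ _ _ h
  · rw [if_neg h]; exact piecewise_eq_of_notMem _ _ _ h

variable {σ : Ordinal} (f : CC) {x : Iic omega1}

lemma Ptilde_apply_of_le (h : (x : Ordinal) ≤ σ) : Ptilde σ f x = f x := by
  simp only [Ptilde, LinearMap.mkContinuous_apply, LinearMap.coe_mk, AddHom.coe_mk,
    ContinuousMap.comp_apply, retr_apply, if_pos h]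

lemma Ptilde_apply_of_lt (h : σ < x) : Ptilde σ f x = f ⊤ := by
  simp only [Ptilde, LinearMap.mkContinuous_apply, LinearMap.coe_mk, AddHom.coe_mk,
    ContinuousMap.comp_apply, retr_apply, if_neg h.not_ge]

lemma Ptilde_apply_top (hσ : σ < omega1) : Ptilde σ f ⊤ = f ⊤ :=
  Ptilde_apply_of_lt f hσ

lemma Ptilde_Ptilde_of_le {τ : Ordinal} (h : σ ≤ τ) (hτ : τ < omega1) :
    Ptilde σ (Ptilde τ f) = Ptilde σ f := by
  ext x
  rcases le_or_gt (x : Ordinal) σ with hx | hx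
  · rw [Ptilde_apply_of_le _ hx, Ptilde_apply_of_le _ hx, Ptilde_apply_of_le _ (hx.trans h)]
  · rw [Ptilde_apply_of_lt _ hx, Ptilde_apply_of_lt _ hx, Ptilde_apply_top _ hτ]

lemma ContinuousMap.exists_forall_Ptilde_eq_self :
    ∃ τ < omega1, ∀ ρ, τ ≤ ρ → Ptilde ρ f = f := by
  obtain ⟨τ, hτ, htail⟩ :=
    ((IsGδ.singleton (f ⊤)).preimage f.continuous).exists_lt_omega1_of_top_mem rfl
  refine ⟨τ, hτ, fun ρ hρ => ContinuousMap.ext fun x => ?_⟩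
  rcases le_or_gt (x : Ordinal) ρ with hx | hx
  · exact Ptilde_apply_of_le f hx
  · exact (Ptilde_apply_of_lt f hx).trans (htail x (hρ.trans_lt hx)).symm

end Ptilde

lemma TopologicalSpace.IsSeparable.exists_forall_Ptilde_eq_self {S : Set CC}
    (hS : IsSeparable S) :
    ∃ τ < omega1, ∀ ρ, τ ≤ ρ → ∀ g ∈ S, Ptilde ρ g = g := by
  obtain ⟨D, hDc, hSD⟩ := hS
  have := hDc.to_subtype
  choose τ hτ hfix using fun d : D => (d : CC).exists_forall_Ptilde_eq_self
  refine ⟨⨆ d, τ d, iSup_lt_omega_one hτ, fun ρ hρ => ?_⟩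
  have hD : D ⊆ {g | Ptilde ρ g = g} := fun d hd =>
    hfix ⟨d, hd⟩ ρ ((Ordinal.le_iSup τ ⟨d, hd⟩).trans hρ)
  exact hSD.trans (closure_minimal hD (isClosed_eq (Ptilde ρ).continuous continuous_id))

/-- `P̃σ f` factors through the clamp `α ↦ min α (σ + 1)` onto the countable compact space
`[0, σ + 1]`. -/
lemma isSeparable_range_Ptilde {σ : Ordinal} (hσ : σ < omega1) :
    IsSeparable (range (Ptilde σ)) := by
  set κ := Order.succ σ
  have hκ : κ < omega1 := (Cardinal.isSuccLimit_omega 1).succ_lt hσ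
  have := countable_Iic_of_lt_omega1 hκ
  let clamp : C(Iic omega1, Iic κ) :=
    ⟨fun x => projIic κ x, (continuous_const.min continuous_subtype_val).subtype_mk _⟩
  let incl : C(Iic κ, Iic omega1) := ⟨inclusion (Iic_subset_Iic.2 hκ.le), continuous_inclusion _⟩
  refine (isSeparable_range (ContinuousMap.continuous_precomp clamp)).mono ?_
  rintro _ ⟨f, rfl⟩
  refine ⟨(Ptilde σ f).comp incl, ContinuousMap.ext fun x => ?_⟩
  show Ptilde σ f (incl (clamp x)) = Ptilde σ f x
  rcases le_or_gt (x : Ordinal) σ with hx | hx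
  · congr
    exact Subtype.ext (min_eq_right (hx.trans (Order.le_succ σ)))
  · have hclamp : σ < incl (clamp x) := by
      show σ < min κ (x : Ordinal)
      exact lt_min (Order.lt_succ σ) hx
    rw [Ptilde_apply_of_lt _ hx, Ptilde_apply_of_lt _ hclamp]

lemma ContinuousLinearMap.norm_apply_le_of_unit_norm {E F : Type*} [NormedAddCommGroup E]
    [NormedSpace ℝ E] [NormedAddCommGroup F] [NormedSpace ℝ F] (T : E →L[ℝ] F)
    (V : Submodule ℝ E) {C : ℝ} (hC : 0 ≤ C) (h : ∀ x ∈ V, ‖x‖ = 1 → ‖T x‖ ≤ C) {x : E}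
    (hx : x ∈ V) : ‖T x‖ ≤ C * ‖x‖ :=
  (T.comp V.subtypeL).le_of_opNorm_le
    (opNorm_le_of_unit_norm hC fun y hy => h y y.2 hy) ⟨x, hx⟩

lemma exists_lt_omega1_le_ker {E F : Type*} [NormedAddCommGroup E] [NormedSpace ℝ E]
    [NormedAddCommGroup F] [NormedSpace ℝ F] (T : E →L[ℝ] F) {V : Ordinal → Submodule ℝ E}
    (hV : Antitone V) (hsmall : ∀ ε > 0, ∃ ξ < omega1, ∀ x ∈ V ξ, ‖x‖ ≤ 1 → ‖T x‖ < ε) :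
    ∃ σ < omega1, V σ ≤ LinearMap.ker (T : E →ₗ[ℝ] F) := by
  choose ξ hξ hT using fun n : ℕ => hsmall (1 / (n + 1)) Nat.one_div_pos_of_nat
  refine ⟨⨆ n, ξ n, iSup_lt_omega_one hξ,
    fun x hx => LinearMap.mem_ker.2 (norm_le_zero_iff.1 ?_)⟩
  have hbound : ∀ n : ℕ, ‖T x‖ ≤ 1 / (n + 1) * ‖x‖ := fun n =>
    T.norm_apply_le_of_unit_norm (V (ξ n)) Nat.one_div_pos_of_nat.le
      (fun y hy hy1 => (hT n y hy hy1.le).le) (hV (Ordinal.le_iSup ξ n) hx)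
  have hlim := tendsto_one_div_add_atTop_nhds_zero_nat.mul_const ‖x‖
  rw [zero_mul] at hlim
  exact ge_of_tendsto' hlim hbound

def vanishing (ξ : Ordinal) : Submodule ℝ CC where
  carrier := {f | (∀ α : Iic omega1, (α : Ordinal) ≤ ξ → f α = 0) ∧ f ⊤ = 0}
  add_mem' hf hg := ⟨fun α hα => by simp [hf.1 α hα, hg.1 α hα], by simp [hf.2, hg.2]⟩
  zero_mem' := ⟨fun _ _ => rfl, rfl⟩
  smul_mem' c f hf := ⟨fun α hα => by simp [hf.1 α hα], by simp [hf.2]⟩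

lemma vanishing_antitone : Antitone vanishing :=
  fun _ _ h _ hf => ⟨fun _ hα => hf.1 _ (hα.trans h), hf.2⟩

lemma sub_Ptilde_mem_vanishing {σ : Ordinal} (hσ : σ < omega1) (f : CC) :
    f - Ptilde σ f ∈ vanishing σ :=
  ⟨fun _ hα => sub_eq_zero.2 (Ptilde_apply_of_le f hα).symm,
    sub_eq_zero.2 (Ptilde_apply_top f hσ).symm⟩

/-- If `T ≠ P̃σ ∘ T ∘ P̃σ` for every countable ordinal `σ`, then there is `ε > 0` such that for
every countable ordinal `ξ` there is `f ∈ C([0,ω₁])` vanishing on `[0,ξ]` and at `ω₁` with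
`‖f‖ ≤ 1` and `‖T f‖ ≥ ε`. -/
theorem exists_eps_of_ne_Ptilde_conj (T : CC →L[ℝ] CC)
    (hT : ∀ σ < omega1, T ≠ (Ptilde σ).comp (T.comp (Ptilde σ))) :
    ∃ ε > (0 : ℝ), ∀ ξ < omega1, ∃ f : CC,
      (∀ α : Set.Iic omega1, (α : Ordinal) ≤ ξ → f α = 0) ∧
      f ⟨omega1, Set.self_mem_Iic⟩ = 0 ∧
      ‖f‖ ≤ 1 ∧ ε ≤ ‖T f‖ := by
  by_contra! hsmall
  obtain ⟨σ, hσ, hker⟩ := exists_lt_omega1_le_ker T vanishing_antitone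
    fun ε hε => (hsmall ε hε).imp fun ξ ⟨hξ, hT⟩ => ⟨hξ, fun f hf => hT f hf.1 hf.2⟩
  have hTP : ∀ f, T f = T (Ptilde σ f) := fun f => by
    simpa [sub_eq_zero] using hker (sub_Ptilde_mem_vanishing hσ f)
  obtain ⟨τ, hτ, hfix⟩ :=
    ((isSeparable_range_Ptilde hσ).image T.continuous).exists_forall_Ptilde_eq_self
  set ρ := max σ τ
  refine hT ρ (max_lt hσ hτ) (ContinuousLinearMap.ext fun f => ?_)
  calc T f = T (Ptilde σ f) := hTP f
    _ = Ptilde ρ (T (Ptilde σ f)) := (hfix ρ (le_max_right σ τ) _ ⟨_, ⟨f, rfl⟩, rfl⟩).symm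
    _ = Ptilde ρ (T (Ptilde ρ f)) := by
      rw [hTP (Ptilde ρ f), Ptilde_Ptilde_of_le _ (le_max_left σ τ) (max_lt hσ hτ)]
end
end
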